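/- For every admissible strategy ϑ ∈ Θ and every k ∈ {1,…,T}, one has P-almost surely Cov[ΔS_k, Σ_{i=k+1}^T ϑ_i ΔS_i | F_{k−1}] = Cov[ΔM_k, Σ_{i=k+1}^T ϑ_i ΔA_i | F_{k−1}]; that is, in the conditional covariance of the stock price increment with the future gains, the price increment may be replaced by its martingale part and the future price increments by their predictable (drift) parts. -/

import Mathlib

/-!
Conditional covariance is bilinear, and given `F_{k-1}` it does not see the predictable summand
`ΔA_k` of `ΔS_k = ΔM_k + ΔA_k`. Splitting the future gains `∑ ϑ_i ΔS_i` into `∑ ϑ_i ΔM_i` and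
`∑ ϑ_i ΔA_i`, the first part drops out as well: `ΔM_k ϑ_i` is `F_{i-1}`-measurable for `i > k`, so
by the tower property `E[ΔM_k ϑ_i ΔM_i | F_{k-1}] = 0`, and `E[ΔM_k | F_{k-1}] = 0`. The
admissibility conditions are exactly what makes `ϑ_i ΔM_i` and `ϑ_i ΔA_i` square integrable, so
that all these conditional expectations are genuine.
-/

open MeasureTheory Finset

noncomputable section

namespace TCMV

variable {Ω : Type*}

/-- Conditional variance of `X` given the σ-algebra `m`. -/
def condVar [MeasurableSpace Ω] (μ : Measure Ω) (m : MeasurableSpace Ω) (X : Ω → ℝ) : Ω → ℝ :=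
  μ[fun ω => (X ω - (μ[X|m]) ω) ^ 2 | m]

/-- Conditional covariance of `X` and `Y` given the σ-algebra `m`. -/
def condCov [MeasurableSpace Ω] (μ : Measure Ω) (m : MeasurableSpace Ω) (X Y : Ω → ℝ) : Ω → ℝ :=
  fun ω => (μ[fun ω' => X ω' * Y ω'|m]) ω - (μ[X|m]) ω * (μ[Y|m]) ω

variable [m0 : MeasurableSpace Ω]

/-- The increment `ΔS_k = S_k - S_{k-1}`. -/
def dS (S : ℕ → Ω → ℝ) (k : ℕ) : Ω → ℝ := fun ω => S k ω - S (k - 1) ω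

/-- The predictable (drift) part of the Doob decomposition: `ΔA_k = E[ΔS_k | F_{k-1}]`. -/
def dA (μ : Measure Ω) (ℱ : Filtration ℕ m0) (S : ℕ → Ω → ℝ) (k : ℕ) : Ω → ℝ :=
  μ[dS S k | ℱ (k - 1)]

/-- The martingale part of the Doob decomposition: `ΔM_k = ΔS_k - E[ΔS_k | F_{k-1}]`. -/
def dM (μ : Measure Ω) (ℱ : Filtration ℕ m0) (S : ℕ → Ω → ℝ) (k : ℕ) : Ω → ℝ :=
  fun ω => dS S k ω - dA μ ℱ S k ω

/-- The set `Θ` of admissible strategies: predictable with the two square-integrability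
properties. -/
def Admissible (μ : Measure Ω) (ℱ : Filtration ℕ m0) (S : ℕ → Ω → ℝ) (T : ℕ)
    (ϑ : ℕ → Ω → ℝ) : Prop :=
  (∀ k ∈ Finset.Icc 1 T, StronglyMeasurable[ℱ (k - 1)] (ϑ k)) ∧
  Integrable (fun ω => ∑ k ∈ Finset.Icc 1 T,
      (ϑ k ω) ^ 2 * (μ[fun ω' => (dM μ ℱ S k ω') ^ 2 | ℱ (k - 1)]) ω) μ ∧
  Integrable (fun ω => (∑ k ∈ Finset.Icc 1 T, |ϑ k ω * dA μ ℱ S k ω|) ^ 2) μ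

/-- The wealth process `V_k(x, ϑ) = x + ∑_{i=1}^k ϑ_i ΔS_i`. -/
def wealth (S : ℕ → Ω → ℝ) (x : ℝ) (ϑ : ℕ → Ω → ℝ) (k : ℕ) : Ω → ℝ :=
  fun ω => x + ∑ i ∈ Finset.Icc 1 k, ϑ i ω * dS S i ω

/-- The conditional mean–variance criterion
`U_k(ϑ) = E[V_T(x,ϑ)|F_k] - (γ/2) Var[V_T(x,ϑ)|F_k]`. -/
def U (μ : Measure Ω) (ℱ : Filtration ℕ m0) (S : ℕ → Ω → ℝ) (T : ℕ) (x γ : ℝ)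
    (ϑ : ℕ → Ω → ℝ) (k : ℕ) : Ω → ℝ :=
  fun ω => (μ[wealth S x ϑ T | ℱ k]) ω - γ / 2 * condVar μ (ℱ k) (wealth S x ϑ T) ω

/-- The local perturbation `ϑ + δ 1_{{k}}` of `ϑ` by `δ` at time `k`. -/
def perturb (ϑ δ : ℕ → Ω → ℝ) (k : ℕ) : ℕ → Ω → ℝ :=
  fun j => if j = k then (fun ω => ϑ k ω + δ k ω) else ϑ j

/-- A strategy is locally mean–variance efficient if local perturbations never increase the
conditional mean–variance criterion. -/
def IsLMVE (μ : Measure Ω) (ℱ : Filtration ℕ m0) (S : ℕ → Ω → ℝ) (T : ℕ) (x γ : ℝ)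
    (θ : ℕ → Ω → ℝ) : Prop :=
  ∀ k ∈ Finset.Icc 1 T, ∀ δ : ℕ → Ω → ℝ, Admissible μ ℱ S T δ →
    ∀ᵐ ω ∂μ, U μ ℱ S T x γ (perturb θ δ k) (k - 1) ω ≤ U μ ℱ S T x γ θ (k - 1) ω

/-- The structure condition (SC): `ΔA_k = 0` a.s. on `{E[(ΔM_k)^2 | F_{k-1}] = 0}`. -/
def SC (μ : Measure Ω) (ℱ : Filtration ℕ m0) (S : ℕ → Ω → ℝ) (T : ℕ) : Prop :=
  ∀ k ∈ Finset.Icc 1 T, ∀ᵐ ω ∂μ,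
    (μ[fun ω' => (dM μ ℱ S k ω') ^ 2 | ℱ (k - 1)]) ω = 0 → dA μ ℱ S k ω = 0

/-- The process `λ_k = ΔA_k / E[(ΔM_k)^2 | F_{k-1}]` (with the convention `0/0 = 0`). -/
def lam (μ : Measure Ω) (ℱ : Filtration ℕ m0) (S : ℕ → Ω → ℝ) (k : ℕ) : Ω → ℝ :=
  fun ω => dA μ ℱ S k ω / (μ[fun ω' => (dM μ ℱ S k ω') ^ 2 | ℱ (k - 1)]) ω

/-- The mean–variance tradeoff process `K_k = ∑_{i=1}^k λ_i ΔA_i`. -/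
def MVT (μ : Measure Ω) (ℱ : Filtration ℕ m0) (S : ℕ → Ω → ℝ) (k : ℕ) : Ω → ℝ :=
  fun ω => ∑ i ∈ Finset.Icc 1 k, lam μ ℱ S i ω * dA μ ℱ S i ω

/-- The Galtchouk–Kunita–Watanabe integrand of `Y_T(ψ) = ∑_{i=1}^T ψ_i ΔA_i` with respect to the
martingale part `M`: `ξ_k(ψ) = E[Y_T(ψ) ΔM_k | F_{k-1}] / E[(ΔM_k)^2 | F_{k-1}]`
(with the convention `0/0 = 0`). -/
def gkw (μ : Measure Ω) (ℱ : Filtration ℕ m0) (S : ℕ → Ω → ℝ) (T : ℕ)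
    (ψ : ℕ → Ω → ℝ) (k : ℕ) : Ω → ℝ :=
  fun ω =>
    (μ[fun ω' => (∑ i ∈ Finset.Icc 1 T, ψ i ω' * dA μ ℱ S i ω') * dM μ ℱ S k ω' | ℱ (k - 1)]) ω
      / (μ[fun ω' => (dM μ ℱ S k ω') ^ 2 | ℱ (k - 1)]) ω
end TCMV

namespace MeasureTheory

open scoped ENNReal

variable {Ω : Type*} {m m0 : MeasurableSpace Ω} {μ : Measure Ω}

theorem lintegral_mul_condLExp (hm : m ≤ m0) [SigmaFinite (μ.trim hm)] {f : Ω → ℝ≥0∞}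
    (hf : Measurable[m] f) {X : Ω → ℝ≥0∞} (hX : AEMeasurable X μ) :
    ∫⁻ ω, f ω * μ⁻[X|m] ω ∂μ = ∫⁻ ω, f ω * X ω ∂μ := by
  have hY : AEMeasurable (μ⁻[X|m]) μ := (measurable_condLExp' m μ X).aemeasurable
  refine Measurable.ennreal_induction (fun c s hs => ?_) (fun f g _ hf hg ihf ihg => ?_)
    (fun f hf hmono ih => ?_) hf
  · simp only [← Set.indicator_mul_left, lintegral_indicator (hm s hs)]
    rw [lintegral_const_mul'' c hY.restrict, lintegral_const_mul'' c hX.restrict,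
      setLIntegral_condLExp hm μ X hs]
  · simp only [Pi.add_apply, add_mul]
    rw [lintegral_add_left' ((hf.mono hm le_rfl).aemeasurable.fun_mul hY),
      lintegral_add_left' ((hf.mono hm le_rfl).aemeasurable.fun_mul hX), ihf, ihg]
  · simp only [ENNReal.iSup_mul]
    rw [lintegral_iSup' (fun n => ((hf n).mono hm le_rfl).aemeasurable.fun_mul hY)
        (ae_of_all _ fun ω i j hij => mul_le_mul_left (hmono hij ω) _),
      lintegral_iSup' (fun n => ((hf n).mono hm le_rfl).aemeasurable.fun_mul hX)
        (ae_of_all _ fun ω i j hij => mul_le_mul_left (hmono hij ω) _)]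
    simp only [ih]

theorem memLp_two_mul_of_integrable_sq_mul_condExp [IsFiniteMeasure μ] (hm : m ≤ m0)
    {f g : Ω → ℝ} (hf : StronglyMeasurable[m] f) (hg : MemLp g 2 μ)
    (hfg : Integrable (fun ω => f ω ^ 2 * μ[fun ω => g ω ^ 2|m] ω) μ) :
    MemLp (fun ω => f ω * g ω) 2 μ := by
  have hg2 : Integrable (fun ω => g ω ^ 2) μ := (memLp_two_iff_integrable_sq hg.1).mp hg
  have hmeas : AEStronglyMeasurable (fun ω => f ω * g ω) μ :=
    (hf.mono hm).aestronglyMeasurable.mul hg.1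
  refine (memLp_two_iff_integrable_sq hmeas).mpr ⟨hmeas.pow 2, ?_⟩
  -- Pulling `f ^ 2` out of a Bochner conditional expectation would presuppose the integrability
  -- being proved; the Lebesgue version `condLExp` has no such side condition.
  calc ∫⁻ ω, ‖(f ω * g ω) ^ 2‖ₑ ∂μ
      = ∫⁻ ω, ‖f ω ^ 2‖ₑ * ‖g ω ^ 2‖ₑ ∂μ := by simp only [mul_pow, enorm_mul]
    _ = ∫⁻ ω, ‖f ω ^ 2‖ₑ * μ⁻[fun ω => ‖g ω ^ 2‖ₑ|m] ω ∂μ :=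
      (lintegral_mul_condLExp hm (measurable_enorm.comp (hf.pow 2).measurable) hg2.1.enorm).symm
    _ = ∫⁻ ω, ‖f ω ^ 2 * μ[fun ω => g ω ^ 2|m] ω‖ₑ ∂μ := by
      refine lintegral_congr_ae ?_
      filter_upwards [condLExp_enorm m hg2 (ae_of_all _ fun ω => sq_nonneg (g ω))] with ω hω
      rw [hω, enorm_mul]
    _ < ⊤ := hfg.2

theorem Integrable.of_finsetSum_of_nonneg {ι : Type*} {s : Finset ι} {f : ι → Ω → ℝ}
    (hf : ∀ i ∈ s, AEStronglyMeasurable (f i) μ) (hf0 : ∀ i ∈ s, 0 ≤ᵐ[μ] f i)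
    (hsum : Integrable (fun ω => ∑ i ∈ s, f i ω) μ) {i : ι} (hi : i ∈ s) :
    Integrable (f i) μ := by
  refine hsum.mono' (hf i hi) ?_
  filter_upwards [(Filter.eventually_all_finset s).2 hf0] with ω hω
  rw [Real.norm_eq_abs, abs_of_nonneg (hω i hi)]
  exact single_le_sum (fun j hj => hω j hj) hi

theorem condExp_finsetSum_ae_eq_zero {ι : Type*} {s : Finset ι} {f : ι → Ω → ℝ}
    (hf : ∀ i ∈ s, Integrable (f i) μ) (hf0 : ∀ i ∈ s, μ[f i|m] =ᵐ[μ] 0) :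
    μ[∑ i ∈ s, f i|m] =ᵐ[μ] 0 := by
  filter_upwards [condExp_finsetSum hf m, (Filter.eventually_all_finset s).2 hf0]
    with ω hsum hω
  rw [hsum, Finset.sum_apply]
  exact sum_eq_zero hω

theorem condExp_mul_ae_eq_zero_of_condExp_ae_eq_zero [IsFiniteMeasure μ]
    {m' : MeasurableSpace Ω} (hmm' : m ≤ m') (hm' : m' ≤ m0) {c X : Ω → ℝ}
    (hc : StronglyMeasurable[m'] c) (hcX : Integrable (fun ω => c ω * X ω) μ)
    (hX : Integrable X μ) (hX0 : μ[X|m'] =ᵐ[μ] 0) :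
    μ[fun ω => c ω * X ω|m] =ᵐ[μ] 0 := by
  have hcX0 : μ[fun ω => c ω * X ω|m'] =ᵐ[μ] 0 := by
    have hpull : μ[fun ω => c ω * X ω|m'] =ᵐ[μ] fun ω => c ω * μ[X|m'] ω :=
      condExp_mul_of_stronglyMeasurable_left hc hcX hX
    filter_upwards [hpull, hX0] with ω h h0
    rw [h, h0, Pi.zero_apply, mul_zero]
  calc μ[fun ω => c ω * X ω|m]
      =ᵐ[μ] μ[μ[fun ω => c ω * X ω|m']|m] := (condExp_condExp_of_le hmm' hm').symm
    _ =ᵐ[μ] μ[0|m] := condExp_congr_ae hcX0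
    _ = 0 := condExp_zero

end MeasureTheory

namespace TCMV

variable {Ω : Type*}

section ConditionalCovariance

variable {m m0 : MeasurableSpace Ω} {μ : Measure Ω} {A X X' Y Y' : Ω → ℝ}

theorem condCov_comm (X Y : Ω → ℝ) : condCov μ m X Y = condCov μ m Y X := by
  funext ω
  simp only [condCov, mul_comm (X _), mul_comm (μ[X|m] ω)]

theorem condCov_add_left [IsFiniteMeasure μ] (hX : MemLp X 2 μ) (hX' : MemLp X' 2 μ)
    (hY : MemLp Y 2 μ) :
    condCov μ m (X + X') Y =ᵐ[μ] condCov μ m X Y + condCov μ m X' Y := by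
  have hXY : Integrable (fun ω => X ω * Y ω) μ := hX.integrable_mul hY
  have hX'Y : Integrable (fun ω => X' ω * Y ω) μ := hX'.integrable_mul hY
  filter_upwards [condExp_add hXY hX'Y m,
    condExp_add (hX.integrable one_le_two) (hX'.integrable one_le_two) m] with ω hmul hadd
  simp only [condCov, Pi.add_apply, add_mul]
  rw [← Pi.add_def, hmul, hadd]
  simp only [Pi.add_apply]
  ring

theorem condCov_add_right [IsFiniteMeasure μ] (hX : MemLp X 2 μ) (hY : MemLp Y 2 μ)
    (hY' : MemLp Y' 2 μ) :
    condCov μ m X (Y + Y') =ᵐ[μ] condCov μ m X Y + condCov μ m X Y' := by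
  simpa only [condCov_comm X] using condCov_add_left hY hY' hX

theorem condCov_ae_eq_zero_of_stronglyMeasurable_left [IsFiniteMeasure μ] (hm : m ≤ m0)
    (hXm : StronglyMeasurable[m] X) (hX : MemLp X 2 μ) (hY : MemLp Y 2 μ) :
    condCov μ m X Y =ᵐ[μ] 0 := by
  have hpull : μ[fun ω => X ω * Y ω|m] =ᵐ[μ] fun ω => X ω * μ[Y|m] ω :=
    condExp_mul_of_stronglyMeasurable_left hXm (hX.integrable_mul hY) (hY.integrable one_le_two)
  filter_upwards [hpull] with ω h
  rw [condCov, h, condExp_of_stronglyMeasurable hm hXm (hX.integrable one_le_two), sub_self,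
    Pi.zero_apply]

theorem condCov_add_left_of_stronglyMeasurable [IsFiniteMeasure μ] (hm : m ≤ m0)
    (hX : MemLp X 2 μ) (hAm : StronglyMeasurable[m] A) (hA : MemLp A 2 μ) (hY : MemLp Y 2 μ) :
    condCov μ m (X + A) Y =ᵐ[μ] condCov μ m X Y := by
  filter_upwards [condCov_add_left hX hA hY,
    condCov_ae_eq_zero_of_stronglyMeasurable_left hm hAm hA hY] with ω h h0
  rw [h, Pi.add_apply, h0, Pi.zero_apply, add_zero]

theorem condCov_add_right_of_condExp_ae_eq_zero [IsFiniteMeasure μ] (hX : MemLp X 2 μ)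
    (hY : MemLp Y 2 μ) (hY' : MemLp Y' 2 μ) (hX0 : μ[X|m] =ᵐ[μ] 0)
    (hXY0 : μ[fun ω => X ω * Y ω|m] =ᵐ[μ] 0) :
    condCov μ m X (Y + Y') =ᵐ[μ] condCov μ m X Y' := by
  filter_upwards [condCov_add_right hX hY hY', hX0, hXY0] with ω h h0 h1
  rw [h, Pi.add_apply, condCov, h0, h1]
  simp

end ConditionalCovariance

section DoobDecomposition

variable [m0 : MeasurableSpace Ω] {μ : Measure Ω} {ℱ : Filtration ℕ m0}
  {S : ℕ → Ω → ℝ}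

theorem dS_eq_dM_add_dA (i : ℕ) : dS S i = dM μ ℱ S i + dA μ ℱ S i := by
  funext ω
  simp [dM]

theorem memLp_dS (hS : ∀ k, MemLp (S k) 2 μ) (i : ℕ) : MemLp (dS S i) 2 μ :=
  (hS i).sub (hS (i - 1))

theorem memLp_dA (hS : ∀ k, MemLp (S k) 2 μ) (i : ℕ) : MemLp (dA μ ℱ S i) 2 μ :=
  (memLp_dS hS i).condExp one_le_two

theorem memLp_dM (hS : ∀ k, MemLp (S k) 2 μ) (i : ℕ) : MemLp (dM μ ℱ S i) 2 μ :=
  (memLp_dS hS i).sub (memLp_dA hS i)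

theorem stronglyMeasurable_dA (i : ℕ) : StronglyMeasurable[ℱ (i - 1)] (dA μ ℱ S i) :=
  stronglyMeasurable_condExp

theorem stronglyMeasurable_dM (hS : Adapted ℱ S) (i : ℕ) :
    StronglyMeasurable[ℱ i] (dM μ ℱ S i) :=
  ((hS i).sub ((hS (i - 1)).mono (ℱ.mono (i.sub_le 1)) le_rfl)).stronglyMeasurable.sub
    ((stronglyMeasurable_dA i).mono (ℱ.mono (i.sub_le 1)))

theorem condExp_dM [IsFiniteMeasure μ] (hS : ∀ k, MemLp (S k) 2 μ) (i : ℕ) :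
    μ[dM μ ℱ S i|ℱ (i - 1)] =ᵐ[μ] 0 := by
  have hdM : dM μ ℱ S i = dS S i - dA μ ℱ S i := rfl
  filter_upwards [condExp_sub ((memLp_dS hS i).integrable one_le_two)
    ((memLp_dA hS i).integrable one_le_two) (ℱ (i - 1))] with ω h
  rw [hdM, h, Pi.sub_apply, condExp_of_stronglyMeasurable (ℱ.le _) (stronglyMeasurable_dA i)
    ((memLp_dA hS i).integrable one_le_two), dA, sub_self, Pi.zero_apply]

variable {T : ℕ} {ϑ : ℕ → Ω → ℝ} {i : ℕ}

theorem Admissible.memLp_mul_dA (hϑ : Admissible μ ℱ S T ϑ) (hi : i ∈ Icc 1 T) :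
    MemLp (fun ω => ϑ i ω * dA μ ℱ S i ω) 2 μ := by
  have hmeas : ∀ j ∈ Icc 1 T, StronglyMeasurable (fun ω => ϑ j ω * dA μ ℱ S j ω) :=
    fun j hj => ((hϑ.1 j hj).mono (ℱ.le _)).mul ((stronglyMeasurable_dA j).mono (ℱ.le _))
  have hsum : MemLp (fun ω => ∑ j ∈ Icc 1 T, |ϑ j ω * dA μ ℱ S j ω|) 2 μ :=
    (memLp_two_iff_integrable_sq (Finset.stronglyMeasurable_fun_sum _
      fun j hj => (hmeas j hj).norm).aestronglyMeasurable).mpr hϑ.2.2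
  refine hsum.of_le (hmeas i hi).aestronglyMeasurable (ae_of_all _ fun ω => ?_)
  rw [Real.norm_eq_abs, Real.norm_of_nonneg (sum_nonneg fun j _ => abs_nonneg _)]
  exact single_le_sum (f := fun j => |ϑ j ω * dA μ ℱ S j ω|) (fun j _ => abs_nonneg _) hi

theorem Admissible.memLp_mul_dM [IsFiniteMeasure μ] (hS : ∀ k, MemLp (S k) 2 μ)
    (hϑ : Admissible μ ℱ S T ϑ) (hi : i ∈ Icc 1 T) :
    MemLp (fun ω => ϑ i ω * dM μ ℱ S i ω) 2 μ := by
  refine memLp_two_mul_of_integrable_sq_mul_condExp (ℱ.le _) (hϑ.1 i hi) (memLp_dM hS i) ?_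
  refine Integrable.of_finsetSum_of_nonneg (fun j hj => ?_) (fun j _ => ?_) hϑ.2.1 hi
  · exact (((hϑ.1 j hj).pow 2).mono (ℱ.le _)).aestronglyMeasurable.mul
      (stronglyMeasurable_condExp.mono (ℱ.le _)).aestronglyMeasurable
  · filter_upwards [condExp_nonneg (m := ℱ (j - 1)) (μ := μ)
      (ae_of_all _ fun ω => sq_nonneg (dM μ ℱ S j ω))] with ω hω
    exact mul_nonneg (sq_nonneg _) hω

theorem condExp_dM_mul_sum_mul_dM [IsFiniteMeasure μ] (hAdapted : Adapted ℱ S)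
    (hS : ∀ k, MemLp (S k) 2 μ) (hϑ : Admissible μ ℱ S T ϑ) (k : ℕ) :
    μ[fun ω => dM μ ℱ S k ω * ∑ i ∈ Icc (k + 1) T, ϑ i ω * dM μ ℱ S i ω|ℱ (k - 1)]
      =ᵐ[μ] 0 := by
  have hsub : Icc (k + 1) T ⊆ Icc 1 T := Icc_subset_Icc_left (by omega)
  have hterm : ∀ i ∈ Icc (k + 1) T,
      Integrable (fun ω => (dM μ ℱ S k ω * ϑ i ω) * dM μ ℱ S i ω) μ := fun i hi =>
    ((memLp_dM hS k).integrable_mul (hϑ.memLp_mul_dM hS (hsub hi))).congr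
      (ae_of_all _ fun ω => (mul_assoc _ _ _).symm)
  have hsum : (fun ω => dM μ ℱ S k ω * ∑ i ∈ Icc (k + 1) T, ϑ i ω * dM μ ℱ S i ω) =
      ∑ i ∈ Icc (k + 1) T, fun ω => (dM μ ℱ S k ω * ϑ i ω) * dM μ ℱ S i ω := by
    funext ω
    simp only [Finset.sum_apply, mul_sum, mul_assoc]
  rw [hsum]
  refine condExp_finsetSum_ae_eq_zero hterm fun i hi => ?_
  have hki : k ≤ i - 1 := by simp only [mem_Icc] at hi; omega
  exact condExp_mul_ae_eq_zero_of_condExp_ae_eq_zero (ℱ.mono (by omega)) (ℱ.le _)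
    (((stronglyMeasurable_dM hAdapted k).mono (ℱ.mono hki)).mul (hϑ.1 i (hsub hi)))
    (hterm i hi) ((memLp_dM hS i).integrable one_le_two) (condExp_dM hS i)

end DoobDecomposition

theorem condCov_martingale_drift_parts_general
    {Ω : Type*} [m0 : MeasurableSpace Ω] (μ : Measure Ω) [IsProbabilityMeasure μ]
    (T : ℕ) (ℱ : Filtration ℕ m0)
    (S : ℕ → Ω → ℝ) (hAdapted : Adapted ℱ S) (hL2 : ∀ k, MemLp (S k) 2 μ)
    (ϑ : ℕ → Ω → ℝ) (hϑ : Admissible μ ℱ S T ϑ)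
    (k : ℕ) :
    ∀ᵐ ω ∂μ,
      condCov μ (ℱ (k - 1)) (dS S k)
          (fun ω' => ∑ i ∈ Finset.Icc (k + 1) T, ϑ i ω' * dS S i ω') ω =
        condCov μ (ℱ (k - 1)) (dM μ ℱ S k)
          (fun ω' => ∑ i ∈ Finset.Icc (k + 1) T, ϑ i ω' * dA μ ℱ S i ω') ω := by
  set GM := fun ω => ∑ i ∈ Icc (k + 1) T, ϑ i ω * dM μ ℱ S i ω
  set GA := fun ω => ∑ i ∈ Icc (k + 1) T, ϑ i ω * dA μ ℱ S i ω
  have hsub : Icc (k + 1) T ⊆ Icc 1 T := Icc_subset_Icc_left (by omega)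
  have hGM : MemLp GM 2 μ := memLp_finsetSum _ fun i hi => hϑ.memLp_mul_dM hL2 (hsub hi)
  have hGA : MemLp GA 2 μ := memLp_finsetSum _ fun i hi => hϑ.memLp_mul_dA (hsub hi)
  have hgains : (fun ω => ∑ i ∈ Icc (k + 1) T, ϑ i ω * dS S i ω) = GM + GA := by
    funext ω
    simp only [GM, GA, Pi.add_apply, ← sum_add_distrib, dS_eq_dM_add_dA (μ := μ) (ℱ := ℱ),
      mul_add]
  rw [hgains, dS_eq_dM_add_dA (μ := μ) (ℱ := ℱ) k]
  exact (condCov_add_left_of_stronglyMeasurable (ℱ.le _) (memLp_dM hL2 k)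
    (stronglyMeasurable_dA k) (memLp_dA hL2 k) (hGM.add hGA)).trans
    (condCov_add_right_of_condExp_ae_eq_zero (memLp_dM hL2 k) hGM hGA (condExp_dM hL2 k)
      (condExp_dM_mul_sum_mul_dM hAdapted hL2 hϑ k))

/-- in the conditional covariance of the stock price increment with the future
gains, the increment may be replaced by its martingale part and the future increments by their
predictable parts. -/
theorem condCov_martingale_drift_parts
    {Ω : Type*} [m0 : MeasurableSpace Ω] (μ : Measure Ω) [IsProbabilityMeasure μ]
    (T : ℕ) (hT : 1 ≤ T) (ℱ : Filtration ℕ m0)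
    (S : ℕ → Ω → ℝ) (hAdapted : Adapted ℱ S) (hL2 : ∀ k, MemLp (S k) 2 μ)
    (ϑ : ℕ → Ω → ℝ) (hϑ : Admissible μ ℱ S T ϑ)
    (k : ℕ) (hk : k ∈ Finset.Icc 1 T) :
    ∀ᵐ ω ∂μ,
      condCov μ (ℱ (k - 1)) (dS S k)
          (fun ω' => ∑ i ∈ Finset.Icc (k + 1) T, ϑ i ω' * dS S i ω') ω =
        condCov μ (ℱ (k - 1)) (dM μ ℱ S k)
          (fun ω' => ∑ i ∈ Finset.Icc (k + 1) T, ϑ i ω' * dA μ ℱ S i ω') ω :=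
  condCov_martingale_drift_parts_general (m0 := m0) μ T ℱ S hAdapted hL2 ϑ hϑ k

end TCMV
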